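/- For the triangle Δ = conv{(0,0),(1,0),(0,1)}, the maximal number A(n) of vertices of a lattice polygon contained in a translate of n·Δ satisfies A(3) = 6. -/

import Mathlib

/-!
The hexagon with vertices `(1,0), (2,0), (0,1), (2,1), (0,2), (1,2)` lies in `3 • Δ`, so `A 3 ≥ 6`.
Conversely, after an integral translation the vertices of a lattice polygon in a translate of
`3 • Δ` are among the ten lattice points of `3 • Δ`. An exhaustive check shows that any seven of
these contain a point that is the midpoint of two others, or lies a third of the way from one to
another; such a point is not a vertex.
-/

open Pointwise

/-- Embedding of lattice points into the plane. -/
def latpt (p : ℤ × ℤ) : ℝ × ℝ := ((p.1 : ℝ), (p.2 : ℝ))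

/-- The unimodular triangle. -/
noncomputable def Δ : Set (ℝ × ℝ) := convexHull ℝ {((0:ℝ),(0:ℝ)), (1,0), (0,1)}

/-- `A n` is the maximal number of vertices of a lattice polygon contained in a
translate of `n • Δ`. -/
noncomputable def A (n : ℕ) : ℕ :=
  sSup {k : ℕ | ∃ V : Finset (ℤ × ℤ), V.Nonempty ∧
    (∃ t : ℝ × ℝ, convexHull ℝ (latpt '' (V : Set (ℤ × ℤ))) ⊆ (n : ℝ) • Δ + {t}) ∧
    (Set.extremePoints ℝ (convexHull ℝ (latpt '' (V : Set (ℤ × ℤ))))).ncard = k}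

section ExtremePoints

variable {E : Type*} [AddCommGroup E] [Module ℝ E]

theorem convex_insert_setOf_lt (f : E →ₗ[ℝ] ℝ) (x : E) :
    Convex ℝ (insert x {y | f y < f x}) := by
  refine convex_iff_openSegment_subset.2 fun y hy z hz w ⟨a, b, ha, hb, hab, hw⟩ => ?_
  subst hw
  have hy' : y = x ∨ f y < f x := hy
  have hz' : z = x ∨ f z < f x := hz
  by_cases hyz : y = x ∧ z = x
  · obtain ⟨rfl, rfl⟩ := hyz
    exact Or.inl (Convex.combo_self hab _)
  right
  show f (a • y + b • z) < f x
  rw [map_add, map_smul, map_smul, smul_eq_mul, smul_eq_mul]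
  rcases hy' with rfl | hy' <;> rcases hz' with rfl | hz'
  · exact absurd ⟨rfl, rfl⟩ hyz
  all_goals obtain rfl := eq_sub_of_add_eq hab; nlinarith

theorem mem_extremePoints_convexHull_of_forall_lt {F : Set E} {x : E} (f : E →ₗ[ℝ] ℝ)
    (hx : x ∈ F) (h : ∀ y ∈ F, y ≠ x → f y < f x) :
    x ∈ (convexHull ℝ F).extremePoints ℝ := by
  have hsub : convexHull ℝ F ⊆ insert x {y | f y < f x} :=
    convexHull_min (fun y hy => (eq_or_ne y x).imp id (h y hy)) (convex_insert_setOf_lt f x)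
  refine mem_extremePoints_iff_left.2
    ⟨subset_convexHull ℝ F hx, fun x₁ h₁ x₂ h₂ ⟨a, b, ha, hb, hab, hx'⟩ => ?_⟩
  have hfx₂ : f x₂ ≤ f x := (hsub h₂).elim (fun h => h ▸ le_rfl) fun h : f x₂ < f x => h.le
  refine (hsub h₁).resolve_right fun (hfx₁ : f x₁ < f x) => ?_
  have hfx : f x = a * f x₁ + b * f x₂ := by simp [← hx']
  obtain rfl := eq_sub_of_add_eq hab
  nlinarith

theorem mem_openSegment_of_smul_add_smul_eq {x y z : E} {a b : ℝ} (ha : 0 < a) (hb : 0 < b)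
    (h : a • x + b • y = (a + b) • z) : z ∈ openSegment ℝ x y := by
  refine mem_openSegment_iff_div.2 ⟨a, b, ha, hb, ?_⟩
  rw [div_eq_inv_mul, div_eq_inv_mul, mul_smul, mul_smul, ← smul_add, h, smul_smul,
    inv_mul_cancel₀ (by positivity), one_smul]

end ExtremePoints

theorem Δ_eq : Δ = {p | 0 ≤ p.1 ∧ 0 ≤ p.2 ∧ p.1 + p.2 ≤ 1} := by
  refine subset_antisymm (convexHull_min ?_ ?_) fun ⟨x, y⟩ ⟨hx, hy, hxy⟩ => ?_
  · simp [Set.insert_subset_iff]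
  · exact (convex_halfSpace_ge (LinearMap.fst ℝ ℝ ℝ).isLinear 0).inter
      ((convex_halfSpace_ge (LinearMap.snd ℝ ℝ ℝ).isLinear 0).inter
        (convex_halfSpace_le (LinearMap.fst ℝ ℝ ℝ + LinearMap.snd ℝ ℝ ℝ).isLinear 1))
  · dsimp only at hx hy hxy
    have hw : ∀ i ∈ Finset.univ, 0 ≤ ![1 - x - y, x, y] i := by
      intro i _
      fin_cases i <;> simp <;> linarith
    have hz : ∀ i ∈ Finset.univ, ![((0 : ℝ), (0 : ℝ)), (1, 0), (0, 1)] i ∈ Δ := by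
      intro i _
      fin_cases i <;> exact subset_convexHull ℝ _ (by simp)
    simpa [Fin.sum_univ_three, Δ] using
      (convex_convexHull ℝ _).sum_mem hw (by simp [Fin.sum_univ_three]; ring) hz

theorem mem_smul_Δ_add_singleton_iff {n : ℝ} (hn : 0 < n) (t p : ℝ × ℝ) :
    p ∈ n • Δ + {t} ↔ t.1 ≤ p.1 ∧ t.2 ≤ p.2 ∧ p.1 + p.2 ≤ t.1 + t.2 + n := by
  rw [Set.add_singleton, Set.image_add_right, Set.mem_preimage,
    Set.mem_smul_set_iff_inv_smul_mem₀ hn.ne', Δ_eq]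
  simp only [Set.mem_ofPred_eq, Prod.smul_fst, Prod.smul_snd, Prod.fst_add, Prod.snd_add,
    Prod.fst_neg, Prod.snd_neg, smul_eq_mul, ← mul_add, inv_mul_le_iff₀ hn,
    mul_nonneg_iff_of_pos_left (inv_pos.2 hn)]
  constructor <;> rintro ⟨h1, h2, h3⟩ <;> refine ⟨?_, ?_, ?_⟩ <;> linarith

theorem latpt_injective : Function.Injective latpt := fun p q h => by
  simp only [latpt, Prod.mk.injEq, Int.cast_inj] at h
  exact Prod.ext h.1 h.2

theorem latpt_add (p q : ℤ × ℤ) : latpt (p + q) = latpt p + latpt q := by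
  simp [latpt]

def latticeTriangle (n : ℕ) : Finset (ℤ × ℤ) :=
  ((Finset.range (n + 1) ×ˢ Finset.range (n + 1)).filter fun p => p.1 + p.2 ≤ n).map
    (Nat.castEmbedding.prodMap Nat.castEmbedding)

theorem mem_latticeTriangle {n : ℕ} {p : ℤ × ℤ} :
    p ∈ latticeTriangle n ↔ 0 ≤ p.1 ∧ 0 ≤ p.2 ∧ p.1 + p.2 ≤ n := by
  constructor
  · rintro hp
    obtain ⟨⟨a, b⟩, hab, rfl⟩ := Finset.mem_map.1 hp
    simp only [Finset.mem_filter, Finset.mem_product, Finset.mem_range] at hab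
    simp only [Function.Embedding.prodMap, Nat.castEmbedding_apply, Function.Embedding.coeFn_mk,
      Prod.map_fst, Prod.map_snd]
    omega
  · rintro ⟨h1, h2, h3⟩
    refine Finset.mem_map.2 ⟨(p.1.toNat, p.2.toNat), ?_, ?_⟩
    · simp only [Finset.mem_filter, Finset.mem_product, Finset.mem_range]
      omega
    · ext <;> simp [h1, h2]

theorem sub_ceil_mem_latticeTriangle {n : ℕ} {t : ℝ × ℝ} {p : ℤ × ℤ} (h1 : t.1 ≤ p.1)
    (h2 : t.2 ≤ p.2) (h3 : (p.1 : ℝ) + p.2 ≤ t.1 + t.2 + n) :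
    p - (⌈t.1⌉, ⌈t.2⌉) ∈ latticeTriangle n := by
  have c1 := Int.ceil_le.2 h1
  have c2 := Int.ceil_le.2 h2
  have c3 : p.1 + p.2 ≤ ⌈t.1⌉ + ⌈t.2⌉ + n := by
    have := Int.le_ceil t.1
    have := Int.le_ceil t.2
    exact_mod_cast (by push_cast; linarith : ((p.1 + p.2 : ℤ) : ℝ) ≤ ⌈t.1⌉ + ⌈t.2⌉ + n)
  exact mem_latticeTriangle.2 ⟨by simpa using c1, by simpa using c2, by simp; omega⟩

theorem latpt_mem_smul_Δ_of_mem_latticeTriangle {n : ℕ} (hn : 0 < n) {p : ℤ × ℤ}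
    (hp : p ∈ latticeTriangle n) : latpt p ∈ (n : ℝ) • Δ + {0} := by
  obtain ⟨h1, h2, h3⟩ := mem_latticeTriangle.1 hp
  refine (mem_smul_Δ_add_singleton_iff (by exact_mod_cast hn) _ _).2 ⟨?_, ?_, ?_⟩ <;>
    simp only [latpt, Prod.fst_zero, Prod.snd_zero, zero_add] <;> exact_mod_cast ‹_›

theorem latpt_mem_extremePoints_of_forall_lt {V : Set (ℤ × ℤ)} {p : ℤ × ℤ} (c : ℤ × ℤ)
    (hp : p ∈ V) (h : ∀ q ∈ V, q ≠ p → c.1 * q.1 + c.2 * q.2 < c.1 * p.1 + c.2 * p.2) :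
    latpt p ∈ (convexHull ℝ (latpt '' V)).extremePoints ℝ := by
  refine mem_extremePoints_convexHull_of_forall_lt
    ((c.1 : ℝ) • LinearMap.fst ℝ ℝ ℝ + (c.2 : ℝ) • LinearMap.snd ℝ ℝ ℝ) ⟨p, hp, rfl⟩ ?_
  rintro _ ⟨q, hq, rfl⟩ hne
  have := h q hq fun e => hne (e ▸ rfl)
  simp only [latpt, LinearMap.add_apply, LinearMap.smul_apply, LinearMap.fst_apply,
    LinearMap.snd_apply, smul_eq_mul]
  exact_mod_cast this

/- `m` is the midpoint of `u v` or one third of the way from `u` to `v`; these two ratios are all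
that occur among lattice points of `3 • Δ`. -/
def HasPointInsideSegment (W : Finset (ℤ × ℤ)) : Prop :=
  ∃ u ∈ W, ∃ v ∈ W, ∃ m ∈ W, u ≠ v ∧ (u + v = m + m ∨ u + u + v = m + m + m)

instance : DecidablePred HasPointInsideSegment := fun W => by
  unfold HasPointInsideSegment; infer_instance

namespace HasPointInsideSegment

variable {W : Finset (ℤ × ℤ)}

theorem mono {W' : Finset (ℤ × ℤ)} (h : HasPointInsideSegment W) (hW : W ⊆ W') :
    HasPointInsideSegment W' := by
  obtain ⟨u, hu, v, hv, m, hm, h⟩ := h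
  exact ⟨u, hW hu, v, hW hv, m, hW hm, h⟩

theorem of_image_sub (c : ℤ × ℤ) (h : HasPointInsideSegment (W.image (· - c))) :
    HasPointInsideSegment W := by
  obtain ⟨_, hu, _, hv, _, hm, huv, hrel⟩ := h
  obtain ⟨u, hu', rfl⟩ := Finset.mem_image.1 hu
  obtain ⟨v, hv', rfl⟩ := Finset.mem_image.1 hv
  obtain ⟨m, hm', rfl⟩ := Finset.mem_image.1 hm
  refine ⟨u, hu', v, hv', m, hm', fun e => huv (e ▸ rfl), hrel.imp ?_ ?_⟩ <;>
    intro e <;> linear_combination e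

theorem not_subset_extremePoints (h : HasPointInsideSegment W) (A : Set (ℝ × ℝ)) :
    ¬ latpt '' W ⊆ A.extremePoints ℝ := by
  intro hA
  obtain ⟨u, hu, v, hv, m, hm, huv, hrel⟩ := h
  have hseg : latpt m ∈ openSegment ℝ (latpt u) (latpt v) := by
    rcases hrel with e | e <;> have e := congrArg latpt e <;> simp only [latpt_add] at e
    · exact mem_openSegment_of_smul_add_smul_eq one_pos one_pos (by simpa [add_smul] using e)
    · exact mem_openSegment_of_smul_add_smul_eq two_pos one_pos
        (by simpa [add_smul, two_smul, add_assoc] using e)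
  have := (mem_extremePoints.1 (hA ⟨m, hm, rfl⟩)).2 _ (extremePoints_subset (hA ⟨u, hu, rfl⟩))
    _ (extremePoints_subset (hA ⟨v, hv, rfl⟩)) hseg
  exact huv (latpt_injective (this.1.trans this.2.symm))

end HasPointInsideSegment

theorem hasPointInsideSegment_of_mem_powersetCard :
    ∀ W ∈ (latticeTriangle 3).powersetCard 7, HasPointInsideSegment W := by
  decide +kernel

theorem hasPointInsideSegment_of_seven_le_card {W : Finset (ℤ × ℤ)} (c : ℤ × ℤ)
    (hW : ∀ p ∈ W, p - c ∈ latticeTriangle 3) (h7 : 7 ≤ W.card) : HasPointInsideSegment W := by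
  have hcard : (W.image (· - c)).card = W.card :=
    Finset.card_image_of_injective _ (sub_left_injective (G := ℤ × ℤ) (b := c))
  obtain ⟨W₇, hW₇, hcard₇⟩ := Finset.exists_subset_card_eq (hcard ▸ h7)
  have hW₇T : W₇ ⊆ latticeTriangle 3 := fun q hq => by
    obtain ⟨p, hp, rfl⟩ := Finset.mem_image.1 (hW₇ hq)
    exact hW p hp
  exact ((hasPointInsideSegment_of_mem_powersetCard W₇
    (Finset.mem_powersetCard.2 ⟨hW₇T, hcard₇⟩)).mono hW₇).of_image_sub c

theorem ncard_extremePoints_le_six (V : Finset (ℤ × ℤ)) (t : ℝ × ℝ)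
    (hV : convexHull ℝ (latpt '' V) ⊆ (3 : ℝ) • Δ + {t}) :
    ((convexHull ℝ (latpt '' V)).extremePoints ℝ).ncard ≤ 6 := by
  obtain ⟨Z, hZV, hZ⟩ :=
    Set.subset_image_iff.1 (extremePoints_convexHull_subset (𝕜 := ℝ) (A := latpt '' V))
  obtain ⟨W, rfl⟩ := (V.finite_toSet.subset hZV).exists_finset_coe
  rw [← hZ, Set.ncard_image_of_injective _ latpt_injective, Set.ncard_coe_finset]
  by_contra! h7
  refine (hasPointInsideSegment_of_seven_le_card (⌈t.1⌉, ⌈t.2⌉) (fun p hp => ?_) h7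
    ).not_subset_extremePoints _ hZ.le
  obtain ⟨h1, h2, h3⟩ := (mem_smul_Δ_add_singleton_iff three_pos t _).1
    (hV (subset_convexHull ℝ _ ⟨p, hZV hp, rfl⟩))
  exact sub_ceil_mem_latticeTriangle (n := 3) h1 h2
    (by exact_mod_cast (show (p.1 : ℝ) + p.2 ≤ _ from h3))

def hexagon : Finset (ℤ × ℤ) := {(1, 0), (2, 0), (0, 1), (2, 1), (0, 2), (1, 2)}

/- The hexagon lies on the ellipse `Q(p - (1, 1)) = 2`, `Q(x, y) = 2x² + 2xy + 2y²`, so at each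
vertex the functional given by half the gradient of `Q` is maximised on the hexagon exactly there. -/
theorem hexagon_forall_lt : ∀ p ∈ hexagon, ∀ q ∈ hexagon, q ≠ p →
    (2 * (p.1 - 1) + (p.2 - 1)) * q.1 + ((p.1 - 1) + 2 * (p.2 - 1)) * q.2 <
      (2 * (p.1 - 1) + (p.2 - 1)) * p.1 + ((p.1 - 1) + 2 * (p.2 - 1)) * p.2 := by
  decide

theorem extremePoints_hexagon :
    (convexHull ℝ (latpt '' hexagon)).extremePoints ℝ = latpt '' hexagon := by
  refine subset_antisymm extremePoints_convexHull_subset ?_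
  rintro _ ⟨p, hp, rfl⟩
  exact latpt_mem_extremePoints_of_forall_lt
    (2 * (p.1 - 1) + (p.2 - 1), (p.1 - 1) + 2 * (p.2 - 1)) hp (hexagon_forall_lt p hp)

theorem convexHull_hexagon_subset : convexHull ℝ (latpt '' hexagon) ⊆ ((3 : ℕ) : ℝ) • Δ + {0} := by
  refine convexHull_min ?_ (((convex_convexHull ℝ _).smul _).add (convex_singleton 0))
  rintro _ ⟨p, hp, rfl⟩
  exact latpt_mem_smul_Δ_of_mem_latticeTriangle three_pos
    ((by decide : hexagon ⊆ latticeTriangle 3) hp)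

theorem stmt15 : A 3 = 6 := by
  refine IsGreatest.csSup_eq ⟨⟨hexagon, by decide, ⟨0, convexHull_hexagon_subset⟩, ?_⟩, ?_⟩
  · rw [extremePoints_hexagon, Set.ncard_image_of_injective _ latpt_injective,
      Set.ncard_coe_finset]
    rfl
  · rintro k ⟨V, -, ⟨t, hV⟩, rfl⟩
    exact ncard_extremePoints_le_six V t (by exact_mod_cast hV)
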